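/- Let ν ∈ (0,1), μ̄ ∈ ℝ, ξ̄ > 0, let Q be a random variable with law N(μ̄, ξ̄²), and let R be a real-valued random variable taking values almost surely in [0,1] and independent of Q. If K is an upper bound for |Φ_a''(U; ν, μ̄, ξ̄)| over U ∈ [0,1] (where the derivatives are with respect to U), then |P((1−ν)Q + ν(2R−1) > 0) − Φ_a(E[R]; ν, μ̄, ξ̄)| ≤ (K/2)·Var[R]. -/

import Mathlib

open MeasureTheory ProbabilityTheory

/-- The complementary error function `erfc x = (2/√π) ∫_x^∞ exp(−t²) dt`. -/
noncomputable def erfc (x : ℝ) : ℝ :=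
  (2 / Real.sqrt Real.pi) * ∫ t in Set.Ioi x, Real.exp (-t ^ 2)

/-- The approximate coarse evolution map
`Φ_a(U; ν̄, μ̄, ξ̄) = (1/2)·erfc[(1/(ξ̄√2))·(ν̄(1−2U)/(1−ν̄) − μ̄)]`. -/
noncomputable def PhiA (U ν μ ξ : ℝ) : ℝ :=
  (1 / 2) * erfc ((1 / (ξ * Real.sqrt 2)) * (ν * (1 - 2 * U) / (1 - ν) - μ))

open Set Real

/-! Conditioning on `R` and using independence, the probability equals
`E[P(Q > ν(1 - 2R)/(1 - ν) | R)]`, and the Gaussian tail `P(Q > a) = erfc((a - μ̄)/(ξ̄√2))/2`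
identifies the integrand with `Φ_a(R)`. Expanding `Φ_a` to second order around `E[R]` with
Lagrange remainder, the linear term has mean zero and the remainder is at most
`(K/2)(R - E[R])²`, whose mean is `(K/2)·Var[R]`. -/

theorem hasDerivAt_integral_Ioi {E : Type*} [NormedAddCommGroup E] [NormedSpace ℝ E]
    [CompleteSpace E] {f : ℝ → E} {x : ℝ} (hf : Integrable f) (hfx : ContinuousAt f x) :
    HasDerivAt (fun y => ∫ t in Ioi y, f t) (-f x) x := by
  have h : (fun y => ∫ t in Ioi y, f t) =
      fun y => (∫ t in Ioi 0, f t) - ∫ t in (0 : ℝ)..y, f t := by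
    funext y
    rw [← intervalIntegral.integral_Ioi_sub_Ioi' hf.integrableOn hf.integrableOn, sub_sub_cancel]
  rw [h]
  exact (intervalIntegral.integral_hasDerivAt_right hf.intervalIntegrable
    hf.aestronglyMeasurable.stronglyMeasurableAtFilter hfx).const_sub _

theorem integrable_exp_neg_sq : Integrable fun t : ℝ => exp (-t ^ 2) := by
  simpa using integrable_exp_neg_mul_sq one_pos

theorem hasDerivAt_erfc (x : ℝ) : HasDerivAt erfc (-(2 / √π) * exp (-x ^ 2)) x := by
  have h := (hasDerivAt_integral_Ioi integrable_exp_neg_sq (x := x) (by fun_prop)).const_mul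
    (2 / √π)
  rwa [mul_neg, ← neg_mul] at h

open scoped ContDiff in
theorem contDiff_erfc : ContDiff ℝ ∞ erfc := by
  rw [contDiff_infty_iff_deriv]
  refine ⟨fun x => (hasDerivAt_erfc x).differentiableAt, ?_⟩
  rw [funext fun x => (hasDerivAt_erfc x).deriv]
  fun_prop

open scoped ContDiff in
theorem contDiff_PhiA (ν μ ξ : ℝ) : ContDiff ℝ ∞ fun U => PhiA U ν μ ξ := by
  unfold PhiA
  exact contDiff_const.mul (contDiff_erfc.comp (by fun_prop))

theorem gaussianPDFReal_zero_inv_two (t : ℝ) :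
    gaussianPDFReal 0 2⁻¹ t = (√π)⁻¹ * exp (-t ^ 2) := by
  simp only [gaussianPDFReal, NNReal.coe_inv, NNReal.coe_ofNat, sub_zero]
  ring_nf

theorem measureReal_gaussianReal_zero_inv_two_Ioi (c : ℝ) :
    (gaussianReal 0 2⁻¹).real (Ioi c) = erfc c / 2 := by
  rw [measureReal_def, gaussianReal_apply_eq_integral _ (by norm_num),
    ENNReal.toReal_ofReal
      (setIntegral_nonneg measurableSet_Ioi fun t _ => gaussianPDFReal_nonneg _ _ t)]
  simp_rw [gaussianPDFReal_zero_inv_two, integral_const_mul, erfc]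
  ring

theorem measureReal_gaussianReal_Ioi (μ : ℝ) {v : NNReal} (hv : v ≠ 0) (a : ℝ) :
    (gaussianReal μ v).real (Ioi a) = erfc ((a - μ) / √(2 * v)) / 2 := by
  have hs : 0 < √(2 * v) := by positivity
  have hmap : (gaussianReal μ v).map (fun x => (x - μ) / √(2 * v)) = gaussianReal 0 2⁻¹ := by
    rw [show (fun x => (x - μ) / √(2 * v)) = (· / √(2 * v)) ∘ (· - μ) from rfl,
      ← Measure.map_map (by fun_prop) (by fun_prop), gaussianReal_map_sub_const,
      gaussianReal_map_div_const]
    congr 1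
    · simp
    · ext
      simp only [NNReal.coe_div, NNReal.coe_mk, NNReal.coe_inv, NNReal.coe_ofNat,
        Real.sq_sqrt (by positivity : (0 : ℝ) ≤ 2 * v)]
      field_simp
  have hpre : (fun x => (x - μ) / √(2 * v)) ⁻¹' Ioi ((a - μ) / √(2 * v)) = Ioi a := by
    ext x
    simp only [mem_preimage, mem_Ioi, div_lt_div_iff_of_pos_right hs, sub_lt_sub_iff_right]
  rw [← hpre, ← map_measureReal_apply (by fun_prop) measurableSet_Ioi, hmap,
    measureReal_gaussianReal_zero_inv_two_Ioi]

theorem PhiA_eq_measureReal_gaussianReal_Ioi (U ν μ : ℝ) {ξ : ℝ} (hξ : 0 < ξ) {v : NNReal}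
    (hv : (v : ℝ) = ξ ^ 2) :
    PhiA U ν μ ξ = (gaussianReal μ v).real (Ioi (ν * (1 - 2 * U) / (1 - ν))) := by
  have hv0 : v ≠ 0 := by rw [← NNReal.coe_ne_zero, hv]; positivity
  rw [measureReal_gaussianReal_Ioi μ hv0, PhiA, hv, Real.sqrt_mul' 2 (sq_nonneg ξ),
    Real.sqrt_sq hξ.le]
  ring_nf

theorem abs_sub_sub_deriv_mul_le {f : ℝ → ℝ} (hf : ContDiff ℝ 2 f) {a b K : ℝ}
    (hK : ∀ t ∈ uIcc a b, |iteratedDeriv 2 f t| ≤ K) :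
    |f b - f a - deriv f a * (b - a)| ≤ K / 2 * (b - a) ^ 2 := by
  rcases eq_or_ne a b with rfl | hab
  · simp
  obtain ⟨t, ht, hft⟩ := taylor_mean_remainder_lagrange_iteratedDeriv (n := 1) hab hf.contDiffOn
  have htaylor : taylorWithinEval f 1 (uIcc a b) a b = f a + deriv f a * (b - a) := by
    rw [← (hf.differentiable (by norm_num) a).derivWithin (uniqueDiffOn_uIcc hab a left_mem_uIcc)]
    simp [mul_comm]
  rw [sub_sub, ← htaylor, hft, abs_div, abs_mul, abs_of_nonneg (sq_nonneg (b - a))]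
  norm_num
  rw [mul_div_right_comm]
  gcongr
  exact hK t (Ioo_subset_Icc_self ht)

theorem measureReal_preimage_prodMk_eq_integral_of_indepFun {Ω α β : Type*} [MeasurableSpace Ω]
    [MeasurableSpace α] [MeasurableSpace β] {P : Measure Ω} [IsFiniteMeasure P]
    {X : Ω → α} {Y : Ω → β} (hX : AEMeasurable X P) (hY : AEMeasurable Y P) (hXY : IndepFun X Y P)
    {S : Set (α × β)} (hS : MeasurableSet S) :
    P.real ((fun ω => (X ω, Y ω)) ⁻¹' S) = ∫ ω, (P.map X).real ((fun x => (x, Y ω)) ⁻¹' S) ∂P := by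
  rw [← map_measureReal_apply_of_aemeasurable (hX.prodMk hY) hS,
    (indepFun_iff_map_prod_eq_prod_map_map hX hY).mp hXY, measureReal_def,
    Measure.prod_apply_symm hS,
    ← integral_toReal (measurable_measure_prodMk_right hS).aemeasurable
      (ae_of_all _ fun _ => measure_lt_top _ _),
    integral_map hY (measurable_measure_prodMk_right hS).ennreal_toReal.aestronglyMeasurable]
  rfl

theorem abs_integral_comp_sub_comp_integral_le_mul_variance {Ω : Type*} [MeasurableSpace Ω] {P : Measure Ω}
    [IsProbabilityMeasure P] {f : ℝ → ℝ} (hf : ContDiff ℝ 2 f) {X : Ω → ℝ} (hX : MemLp X 2 P)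
    {s : Set ℝ} (hs : Convex ℝ s) (hsc : IsClosed s) (hXs : ∀ᵐ ω ∂P, X ω ∈ s) {K : ℝ}
    (hK : ∀ t ∈ s, |iteratedDeriv 2 f t| ≤ K) :
    |∫ ω, f (X ω) ∂P - f (∫ ω, X ω ∂P)| ≤ K / 2 * variance X P := by
  set m := ∫ ω, X ω ∂P
  have hXint : Integrable X P := hX.integrable one_le_two
  have hm : m ∈ s := hs.integral_mem hsc hXs hXint
  have hsq : Integrable (fun ω => (X ω - m) ^ 2) P := (hX.sub (memLp_const m)).integrable_sq
  have hrem : ∀ᵐ ω ∂P, ‖f (X ω) - f m - deriv f m * (X ω - m)‖ ≤ K / 2 * (X ω - m) ^ 2 :=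
    hXs.mono fun ω hω => abs_sub_sub_deriv_mul_le hf fun t ht =>
      hK t (hs.ordConnected.uIcc_subset hm hω ht)
  have hremint : Integrable (fun ω => f (X ω) - f m - deriv f m * (X ω - m)) P :=
    (hsq.const_mul _).mono' (by fun_prop) hrem
  have hlin : Integrable (fun ω => deriv f m * (X ω - m)) P :=
    (hXint.sub (integrable_const m)).const_mul _
  have hfX : Integrable (fun ω => f (X ω)) P :=
    ((hremint.add hlin).add (integrable_const (f m))).congr
      (ae_of_all _ fun ω => by simp only [Pi.add_apply]; ring)
  have hcenter : ∫ ω, deriv f m * (X ω - m) ∂P = 0 := by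
    rw [integral_const_mul, integral_sub hXint (integrable_const m)]
    simp [m]
  calc |∫ ω, f (X ω) ∂P - f m|
      = ‖∫ ω, (f (X ω) - f m - deriv f m * (X ω - m)) ∂P‖ := by
        rw [integral_sub (f := fun ω => f (X ω) - f m) (hfX.sub (integrable_const _)) hlin,
          hcenter, sub_zero, integral_sub hfX (integrable_const _), integral_const]
        simp
    _ ≤ ∫ ω, K / 2 * (X ω - m) ^ 2 ∂P := norm_integral_le_of_norm_le (hsq.const_mul _) hrem
    _ = K / 2 * variance X P := by
        rw [integral_const_mul, variance_eq_integral hX.aestronglyMeasurable.aemeasurable]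

/-- With `Q ~ N(μ̄, ξ̄²)` independent of `R`, `R` a.s. in `[0,1]`, and
`K` an upper bound for `|Φ_a''(·; ν, μ̄, ξ̄)|` on `[0,1]`, one has
`|P((1−ν)Q + ν(2R−1) > 0) − Φ_a(E[R])| ≤ (K/2)·Var[R]`. -/
theorem purchase_prob_close_to_coarse_map
    {Ω : Type*} [MeasureSpace Ω] [IsProbabilityMeasure (ℙ : Measure Ω)]
    (ν μbar ξbar : ℝ) (hν : ν ∈ Set.Ioo (0 : ℝ) 1) (hξ : 0 < ξbar)
    (Q R : Ω → ℝ) (hQm : Measurable Q) (hRm : Measurable R)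
    (hQ : Measure.map Q ℙ = gaussianReal μbar ⟨ξbar ^ 2, sq_nonneg ξbar⟩)
    (hIndep : IndepFun Q R ℙ)
    (hR01 : ∀ᵐ ω ∂ℙ, R ω ∈ Set.Icc (0 : ℝ) 1)
    (K : ℝ)
    (hK : ∀ U ∈ Set.Icc (0 : ℝ) 1,
      |iteratedDeriv 2 (fun u => PhiA u ν μbar ξbar) U| ≤ K) :
    |(ℙ {ω | (1 - ν) * Q ω + ν * (2 * R ω - 1) > 0}).toReal -
        PhiA (∫ ω, R ω ∂ℙ) ν μbar ξbar| ≤ (K / 2) * variance R ℙ := by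
  set S : Set (ℝ × ℝ) := {p | (1 - ν) * p.1 + ν * (2 * p.2 - 1) > 0}
  have hslice (r : ℝ) : (fun q => (q, r)) ⁻¹' S = Ioi (ν * (1 - 2 * r) / (1 - ν)) := by
    ext q
    simp only [S, mem_preimage, mem_ofPred_eq, mem_Ioi, div_lt_iff₀ (sub_pos.mpr hν.2)]
    constructor <;> intro h <;> linarith
  have hS : MeasurableSet S := measurableSet_lt measurable_const (by fun_prop)
  have hprob : (ℙ {ω | (1 - ν) * Q ω + ν * (2 * R ω - 1) > 0}).toReal =
      ∫ ω, PhiA (R ω) ν μbar ξbar ∂ℙ :=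
    calc _ = (ℙ : Measure Ω).real ((fun ω => (Q ω, R ω)) ⁻¹' S) := rfl
      _ = ∫ ω, ((ℙ : Measure Ω).map Q).real ((fun q => (q, R ω)) ⁻¹' S) ∂ℙ :=
        measureReal_preimage_prodMk_eq_integral_of_indepFun hQm.aemeasurable hRm.aemeasurable
          hIndep hS
      _ = ∫ ω, PhiA (R ω) ν μbar ξbar ∂ℙ := by
        congr 1 with ω
        rw [hslice, hQ]
        exact (PhiA_eq_measureReal_gaussianReal_Ioi _ ν μbar hξ rfl).symm
  have hRL2 : MemLp R 2 ℙ := MemLp.of_bound hRm.aestronglyMeasurable 1 <|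
    hR01.mono fun ω hω => abs_le.mpr ⟨by linarith [hω.1], hω.2⟩
  rw [hprob]
  exact abs_integral_comp_sub_comp_integral_le_mul_variance
    ((contDiff_PhiA ν μbar ξbar).of_le (by norm_cast)) hRL2 (convex_Icc 0 1)
    isClosed_Icc hR01 hK
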